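/- arXiv:0809.4450 — 4 statements merged into one kernel-verified Lean document; each statement's English description precedes it below -/
import Mathlib

section
/- If a C¹ curve (x₁(t),...,x₄(t)) satisfies x₁(t) = √(x₂(t)² + x₃(t)² + x₄(t)²) > 0 and ẋ₁ > 0 and -ẋ₁² + ẋ₂² + ẋ₃² + ẋ₄² ≤ 0 on an interval, then -ẋ₁² + ẋ₂² + ẋ₃² + ẋ₄² = 0 on that interval, i.e., the curve is null. -/
/-!
On the cone the time coordinate is the norm of the spatial part `γ = (x₂, x₃, x₄)`, and
`|‖γ s‖ - ‖γ t‖| ≤ ‖γ s - γ t‖` bounds the difference quotients of `x₁` by those of `γ`.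
Hence `|ẋ₁| ≤ ‖γ̇‖`: a curve on the cone is never timelike, so a non-spacelike one is null.
-/

open Filter Topology

theorem HasDerivAt.abs_le_norm_of_eventuallyEq_norm {E : Type*} [NormedAddCommGroup E]
    [NormedSpace ℝ E] {r : ℝ → ℝ} {γ : ℝ → E} {r' : ℝ} {γ' : E} {t : ℝ}
    (hr : HasDerivAt r r' t) (hγ : HasDerivAt γ γ' t) (h : r =ᶠ[𝓝 t] fun s => ‖γ s‖) :
    |r'| ≤ ‖γ'‖ := by
  refine le_of_tendsto_of_tendsto (hasDerivAt_iff_tendsto_slope.1 hr).abs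
    (hasDerivAt_iff_tendsto_slope.1 hγ).norm ?_
  filter_upwards [nhdsWithin_le_nhds h] with s hs
  rw [slope_def_field, slope_def_module, norm_smul, hs, h.eq_of_nhds, abs_div, norm_inv,
    Real.norm_eq_abs, div_eq_inv_mul]
  exact mul_le_mul_of_nonneg_left (abs_norm_sub_norm_le _ _) (by positivity)

theorem hasDerivAt_euclideanSpace {ι : Type*} [Fintype ι] {f : ι → ℝ → ℝ} {f' : ι → ℝ} {t : ℝ}
    (h : ∀ i, HasDerivAt (f i) (f' i) t) :
    HasDerivAt (fun s => WithLp.toLp 2 fun i => f i s) (WithLp.toLp 2 f' : EuclideanSpace ℝ ι) t :=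
  (PiLp.hasFDerivAt_toLp (𝕜 := ℝ) 2 _).comp_hasDerivAt t (hasDerivAt_pi.2 h)

theorem EuclideanSpace.norm_toLp_fin_three (a b c : ℝ) :
    ‖(WithLp.toLp 2 ![a, b, c] : EuclideanSpace ℝ (Fin 3))‖ = √(a ^ 2 + b ^ 2 + c ^ 2) := by
  simp [EuclideanSpace.norm_eq, Fin.sum_univ_three]

theorem curve_on_cone_boundary_is_null_general
    (a b : ℝ) (x₁ x₂ x₃ x₄ x₁' x₂' x₃' x₄' : ℝ → ℝ)
    (hd₁ : ∀ t ∈ Set.Ioo a b, HasDerivAt x₁ (x₁' t) t)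
    (hd₂ : ∀ t ∈ Set.Ioo a b, HasDerivAt x₂ (x₂' t) t)
    (hd₃ : ∀ t ∈ Set.Ioo a b, HasDerivAt x₃ (x₃' t) t)
    (hd₄ : ∀ t ∈ Set.Ioo a b, HasDerivAt x₄ (x₄' t) t)
    (hcone : ∀ t ∈ Set.Ioo a b,
      x₁ t = Real.sqrt ((x₂ t)^2 + (x₃ t)^2 + (x₄ t)^2) ∧ 0 < x₁ t)
    (hnspc : ∀ t ∈ Set.Ioo a b,
      -(x₁' t)^2 + (x₂' t)^2 + (x₃' t)^2 + (x₄' t)^2 ≤ 0) :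
    ∀ t ∈ Set.Ioo a b,
      -(x₁' t)^2 + (x₂' t)^2 + (x₃' t)^2 + (x₄' t)^2 = 0 := by
  intro t ht
  let γ : ℝ → EuclideanSpace ℝ (Fin 3) := fun s => WithLp.toLp 2 ![x₂ s, x₃ s, x₄ s]
  have hγ : HasDerivAt γ (WithLp.toLp 2 ![x₂' t, x₃' t, x₄' t]) t := by
    convert hasDerivAt_euclideanSpace (f := ![x₂, x₃, x₄]) (f' := ![x₂' t, x₃' t, x₄' t])
      (t := t) (fun i => by fin_cases i <;> simp [hd₂ t ht, hd₃ t ht, hd₄ t ht]) using 3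
    ext i; fin_cases i <;> rfl
  have hx₁ : x₁ =ᶠ[𝓝 t] fun s => ‖γ s‖ := by
    filter_upwards [isOpen_Ioo.mem_nhds ht] with s hs
    rw [EuclideanSpace.norm_toLp_fin_three]
    exact (hcone s hs).1
  have hle : (x₁' t) ^ 2 ≤ (x₂' t) ^ 2 + (x₃' t) ^ 2 + (x₄' t) ^ 2 := by
    have := (hd₁ t ht).abs_le_norm_of_eventuallyEq_norm hγ hx₁
    rwa [EuclideanSpace.norm_toLp_fin_three, ← abs_of_nonneg (Real.sqrt_nonneg _), ← sq_le_sq,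
      Real.sq_sqrt (by positivity)] at this
  linarith [hnspc t ht]

theorem curve_on_cone_boundary_is_null
    (a b : ℝ) (x₁ x₂ x₃ x₄ x₁' x₂' x₃' x₄' : ℝ → ℝ)
    (hd₁ : ∀ t ∈ Set.Ioo a b, HasDerivAt x₁ (x₁' t) t)
    (hd₂ : ∀ t ∈ Set.Ioo a b, HasDerivAt x₂ (x₂' t) t)
    (hd₃ : ∀ t ∈ Set.Ioo a b, HasDerivAt x₃ (x₃' t) t)
    (hd₄ : ∀ t ∈ Set.Ioo a b, HasDerivAt x₄ (x₄' t) t)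
    (hcone : ∀ t ∈ Set.Ioo a b,
      x₁ t = Real.sqrt ((x₂ t)^2 + (x₃ t)^2 + (x₄ t)^2) ∧ 0 < x₁ t)
    (hfd : ∀ t ∈ Set.Ioo a b, 0 < x₁' t)
    (hnspc : ∀ t ∈ Set.Ioo a b,
      -(x₁' t)^2 + (x₂' t)^2 + (x₃' t)^2 + (x₄' t)^2 ≤ 0) :
    ∀ t ∈ Set.Ioo a b,
      -(x₁' t)^2 + (x₂' t)^2 + (x₃' t)^2 + (x₄' t)^2 = 0 :=
  curve_on_cone_boundary_is_null_general a b x₁ x₂ x₃ x₄ x₁' x₂' x₃' x₄' hd₁ hd₂ hd₃ hd₄ hcone hnspc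
end

section
/- Let γ(t) = (x(t), y(t), z(t)) be a geodesic through the origin of the Lorentzian Heisenberg group, i.e., -x(t)²+y(t)² = (4‖v₀‖²/θ²) sinh²(|θ|t/2) and z(t) = (‖v₀‖²/(2θ²))(|θ|t - sinh(|θ|t)) with θ ≠ 0 and ‖v₀‖² = -ẋ₀²+ẏ₀². Then for all t ≠ 0: -x(t)² + y(t)² + 4|z(t)| < 0 if ‖v₀‖² < 0, = 0 if ‖v₀‖² = 0, and > 0 if ‖v₀‖² > 0. -/
/-!
With `u = |θ t|`, the identities `2 sinh² (u/2) = cosh u - 1` and `|s - sinh s| = sinh |s| - |s|`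
turn `-x² + y² + 4|z|` into `(2/θ²) (N (cosh u - 1) + |N| (sinh u - u))`, where `N = ‖v₀‖²`.
For `N > 0` the bracket is `N (eᵘ - 1 - u)`, for `N < 0` it is `N (e⁻ᵘ - 1 + u)`, and
`eᵛ > 1 + v` for `v ≠ 0` shows that it has the sign of `N`.
-/

namespace Real

theorem two_mul_sinh_half_sq (s : ℝ) : 2 * sinh (s / 2) ^ 2 = cosh s - 1 := by
  have h := cosh_two_mul (s / 2)
  rw [mul_div_cancel₀ s two_ne_zero, cosh_sq] at h
  linarith

theorem abs_self_sub_sinh (s : ℝ) : |s - sinh s| = sinh |s| - |s| := by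
  rcases le_or_gt 0 s with hs | hs
  · rw [abs_of_nonneg hs, abs_of_nonpos (sub_nonpos.2 (self_le_sinh_iff.2 hs))]
    ring
  · rw [abs_of_neg hs, abs_of_pos (sub_pos.2 (sinh_lt_self_iff.2 hs)), sinh_neg]
    ring

end Real

open Real (sinh cosh exp)

theorem sign_mul_cosh_sub_one_add_abs_mul_sinh_sub {u : ℝ} (hu : 0 < u) (N : ℝ) :
    SignType.sign (N * (cosh u - 1) + |N| * (sinh u - u)) = SignType.sign N := by
  rcases lt_trichotomy N 0 with hN | rfl | hN
  · have hexp : 1 - u < exp (-u) := Real.one_sub_lt_exp_neg hu.ne'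
    have h : N * (cosh u - 1) + |N| * (sinh u - u) = N * (exp (-u) - (1 - u)) := by
      rw [abs_of_neg hN, ← Real.cosh_sub_sinh]
      ring
    rw [h, sign_neg hN, sign_neg (mul_neg_of_neg_of_pos hN (sub_pos.2 hexp))]
  · simp
  · have hexp : u + 1 < exp u := Real.add_one_lt_exp hu.ne'
    have h : N * (cosh u - 1) + |N| * (sinh u - u) = N * (exp u - (u + 1)) := by
      rw [abs_of_pos hN, ← Real.cosh_add_sinh]
      ring
    rw [h, sign_pos hN, sign_pos (mul_pos hN (sub_pos.2 hexp))]

theorem four_mul_div_sinh_half_sq_add_four_mul_abs (N θ s : ℝ) :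
    4 * N / θ ^ 2 * sinh (s / 2) ^ 2 + 4 * |N / (2 * θ ^ 2) * (s - sinh s)|
      = 2 / θ ^ 2 * (N * (cosh |s| - 1) + |N| * (sinh |s| - |s|)) := by
  have h2θ : |2 * θ ^ 2| = 2 * θ ^ 2 := abs_of_nonneg (by positivity)
  rw [abs_mul, abs_div, h2θ, Real.abs_self_sub_sinh, Real.cosh_abs, ← Real.two_mul_sinh_half_sq]
  ring

theorem causal_character_of_geodesics (θ dx₀ dy₀ : ℝ) (hθ : θ ≠ 0)
    (x y z : ℝ → ℝ)
    (hxy : ∀ t, -(x t)^2 + (y t)^2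
      = (4 * (-dx₀^2 + dy₀^2) / θ^2) * (Real.sinh (|θ| * t / 2))^2)
    (hz : ∀ t, z t = ((-dx₀^2 + dy₀^2) / (2 * θ^2)) * (|θ| * t - Real.sinh (|θ| * t))) :
    ∀ t : ℝ, t ≠ 0 →
      ((-dx₀^2 + dy₀^2 < 0 → -(x t)^2 + (y t)^2 + 4 * |z t| < 0) ∧
       (-dx₀^2 + dy₀^2 = 0 → -(x t)^2 + (y t)^2 + 4 * |z t| = 0) ∧
       (0 < -dx₀^2 + dy₀^2 → 0 < -(x t)^2 + (y t)^2 + 4 * |z t|)) := by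
  intro t ht
  have hu : 0 < |(|θ| * t)| := abs_pos.2 (mul_ne_zero (abs_ne_zero.2 hθ) ht)
  have hsign : SignType.sign (-(x t)^2 + (y t)^2 + 4 * |z t|)
      = SignType.sign (-dx₀^2 + dy₀^2) := by
    rw [hxy, hz, four_mul_div_sinh_half_sq_add_four_mul_abs, sign_mul,
      sign_pos (by positivity : (0 : ℝ) < 2 / θ ^ 2), one_mul,
      sign_mul_cosh_sub_one_add_abs_mul_sinh_sub hu]
  refine ⟨fun h => ?_, fun h => ?_, fun h => ?_⟩
  · rwa [← sign_eq_neg_one_iff, hsign, sign_eq_neg_one_iff]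
  · rwa [← sign_eq_zero_iff, hsign, sign_eq_zero_iff]
  · rwa [← sign_eq_one_iff, hsign, sign_eq_one_iff]
end

section
/- The function μ(τ) = τ/sinh²(τ) - coth(τ), extended by μ(0) = 0, is strictly decreasing on ℝ, tends to 1 as τ → -∞ and to -1 as τ → +∞. Consequently, for every r ∈ (-1, 1) the equation μ(τ) = r has exactly one solution τ ∈ ℝ, and for |r| ≥ 1 there is no solution. -/
open Filter

/-- The function μ(τ) = τ/sinh²(τ) - coth(τ), extended by μ(0) = 0. -/
noncomputable def muFn (τ : ℝ) : ℝ :=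
  if τ = 0 then 0 else τ / (Real.sinh τ)^2 - Real.cosh τ / Real.sinh τ

/-!
The function `μ` is odd, and for `τ ≠ 0` its derivative is `2 (sinh τ - τ cosh τ) / sinh³ τ`,
which is negative for `τ > 0` because `x ↦ x cosh x - sinh x` increases from `0`. The bounds
`-2τ < μ τ < 0` for `τ > 0` make `μ` continuous at the removable singularity, and
`|μ τ + 1| < 1/τ` gives the limit at `+∞`. A continuous strictly decreasing function maps `ℝ`
injectively onto the open interval between its two limits.
-/

open Set Real Topology

theorem Real.sinh_lt_mul_cosh {x : ℝ} (hx : 0 < x) : sinh x < x * cosh x := by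
  have hderiv : ∀ y, HasDerivAt (fun y => y * cosh y - sinh y) (y * sinh y) y := fun y =>
    (((hasDerivAt_id' y).fun_mul (hasDerivAt_cosh y)).fun_sub (hasDerivAt_sinh y)).congr_deriv
      (by ring)
  have hmono : StrictMonoOn (fun y => y * cosh y - sinh y) (Ici 0) :=
    strictMonoOn_of_hasDerivWithinAt_pos (convex_Ici 0)
      (fun y _ => (hderiv y).continuousAt.continuousWithinAt)
      (fun y _ => (hderiv y).hasDerivWithinAt)
      (fun y hy => by rw [interior_Ici] at hy; exact mul_pos hy (sinh_pos_iff.2 hy))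
  simpa using hmono self_mem_Ici hx.le hx

theorem StrictAnti.range_eq_Ioo_of_tendsto {α β : Type*} [LinearOrder α] [TopologicalSpace α]
    [ConnectedSpace α] [NoMaxOrder α] [NoMinOrder α] [LinearOrder β] [TopologicalSpace β]
    [OrderClosedTopology β] {f : α → β} {a b : β} (hf : StrictAnti f) (hcont : Continuous f)
    (hbot : Tendsto f atBot (𝓝 a)) (htop : Tendsto f atTop (𝓝 b)) :
    range f = Ioo b a := by
  ext r
  constructor
  · rintro ⟨x, rfl⟩
    obtain ⟨y, hxy⟩ := exists_gt x
    obtain ⟨z, hzx⟩ := exists_lt x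
    exact ⟨(hf.antitone.le_of_tendsto htop y).trans_lt (hf hxy),
      (hf hzx).trans_le (hf.antitone.ge_of_tendsto hbot z)⟩
  · rintro ⟨hbr, hra⟩
    exact mem_range_of_exists_le_of_exists_ge hcont
      ((htop.eventually (eventually_lt_nhds hbr)).exists.imp fun _ => le_of_lt)
      ((hbot.eventually (eventually_gt_nhds hra)).exists.imp fun _ => le_of_lt)

lemma muFn_of_ne_zero {τ : ℝ} (hτ : τ ≠ 0) :
    muFn τ = τ / sinh τ ^ 2 - cosh τ / sinh τ :=
  if_neg hτ

lemma muFn_eq_div {τ : ℝ} (hτ : τ ≠ 0) :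
    muFn τ = (τ - sinh τ * cosh τ) / sinh τ ^ 2 := by
  have hs : sinh τ ≠ 0 := sinh_ne_zero.2 hτ
  rw [muFn_of_ne_zero hτ]
  field_simp

lemma muFn_neg (τ : ℝ) : muFn (-τ) = -muFn τ := by
  rcases eq_or_ne τ 0 with rfl | hτ
  · simp [muFn]
  · rw [muFn_of_ne_zero hτ, muFn_of_ne_zero (neg_ne_zero.2 hτ), sinh_neg, cosh_neg]
    ring

lemma muFn_lt_zero {τ : ℝ} (hτ : 0 < τ) : muFn τ < 0 := by
  have hs : 0 < sinh τ := sinh_pos_iff.2 hτ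
  rw [muFn_eq_div hτ.ne']
  exact div_neg_of_neg_of_pos (by nlinarith [self_lt_sinh_iff.2 hτ, one_le_cosh τ])
    (by positivity)

lemma neg_two_mul_lt_muFn {τ : ℝ} (hτ : 0 < τ) : -(2 * τ) < muFn τ := by
  have hs : 0 < sinh τ := sinh_pos_iff.2 hτ
  have h := sinh_lt_mul_cosh (by positivity : 0 < 2 * τ)
  rw [sinh_two_mul, cosh_two_mul] at h
  rw [muFn_eq_div hτ.ne', lt_div_iff₀ (by positivity)]
  nlinarith [cosh_sq_sub_sinh_sq τ]

lemma abs_muFn_le (τ : ℝ) : |muFn τ| ≤ 2 * |τ| := by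
  wlog hτ : 0 ≤ τ generalizing τ
  · simpa [muFn_neg] using this (-τ) (by linarith)
  rcases hτ.eq_or_lt with rfl | hτ
  · simp [muFn]
  · rw [abs_of_neg (muFn_lt_zero hτ), abs_of_pos hτ]
    linarith [neg_two_mul_lt_muFn hτ]

lemma hasDerivAt_muFn {τ : ℝ} (hτ : τ ≠ 0) :
    HasDerivAt muFn (2 * (sinh τ - τ * cosh τ) / sinh τ ^ 3) τ := by
  have hs : sinh τ ≠ 0 := sinh_ne_zero.2 hτ
  have h := ((hasDerivAt_id' τ).fun_div ((hasDerivAt_sinh τ).fun_pow 2)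
    (pow_ne_zero 2 hs)).fun_sub ((hasDerivAt_cosh τ).fun_div (hasDerivAt_sinh τ) hs)
  refine (h.congr_of_eventuallyEq ?_).congr_deriv ?_
  · filter_upwards [isOpen_ne.mem_nhds hτ] with x hx using muFn_of_ne_zero hx
  · field_simp
    linear_combination sinh τ ^ 2 * cosh_sq_sub_sinh_sq τ

lemma continuous_muFn : Continuous muFn := by
  refine continuous_iff_continuousAt.2 fun τ => ?_
  rcases eq_or_ne τ 0 with rfl | hτ
  · have h2abs : Tendsto (fun τ : ℝ => 2 * |τ|) (𝓝 0) (𝓝 0) := by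
      simpa using (continuous_abs.tendsto (0 : ℝ)).const_mul 2
    simpa [ContinuousAt, muFn] using squeeze_zero_norm abs_muFn_le h2abs
  · exact (hasDerivAt_muFn hτ).continuousAt

lemma strictAnti_muFn : StrictAnti muFn := by
  have hderiv_neg : ∀ τ ∈ interior (Ici (0 : ℝ)),
      2 * (sinh τ - τ * cosh τ) / sinh τ ^ 3 < 0 := fun τ hτ => by
    rw [interior_Ici] at hτ
    have hs : 0 < sinh τ := sinh_pos_iff.2 hτ
    exact div_neg_of_neg_of_pos (by linarith [sinh_lt_mul_cosh hτ]) (by positivity)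
  refine strictAnti_of_odd_strictAntiOn_nonneg muFn_neg
    (strictAntiOn_of_hasDerivWithinAt_neg (convex_Ici 0) continuous_muFn.continuousOn
      (fun τ hτ => ?_) hderiv_neg)
  rw [interior_Ici] at hτ
  exact (hasDerivAt_muFn hτ.ne').hasDerivWithinAt

lemma muFn_lt_inv_sub_one {τ : ℝ} (hτ : 0 < τ) : muFn τ < τ⁻¹ - 1 := by
  have hs : 0 < sinh τ := sinh_pos_iff.2 hτ
  have hfirst : τ / sinh τ ^ 2 < τ⁻¹ :=
    calc τ / sinh τ ^ 2 < τ / τ ^ 2 := by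
          gcongr
          exact self_lt_sinh_iff.2 hτ
      _ = τ⁻¹ := by field_simp
  have hsecond : 1 < cosh τ / sinh τ := (one_lt_div hs).2 (sinh_lt_cosh τ)
  rw [muFn_of_ne_zero hτ.ne']
  linarith

lemma neg_one_sub_inv_lt_muFn {τ : ℝ} (hτ : 0 < τ) : -1 - τ⁻¹ < muFn τ := by
  have hs : 0 < sinh τ := sinh_pos_iff.2 hτ
  have hfirst : 0 < τ / sinh τ ^ 2 := by positivity
  have hgap : cosh τ - sinh τ < 1 := by
    rw [cosh_sub_sinh]
    exact exp_lt_one_iff.2 (neg_neg_of_pos hτ)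
  have hratio : 1 < sinh τ / τ := (one_lt_div hτ).2 (self_lt_sinh_iff.2 hτ)
  have hsecond : cosh τ / sinh τ < 1 + τ⁻¹ := by
    rw [div_lt_iff₀ hs, add_mul, one_mul, inv_mul_eq_div]
    linarith
  rw [muFn_of_ne_zero hτ.ne']
  linarith

lemma tendsto_muFn_atTop : Tendsto muFn atTop (𝓝 (-1)) := by
  have hlower : Tendsto (fun τ : ℝ => -1 - τ⁻¹) atTop (𝓝 (-1)) := by
    simpa using tendsto_const_nhds.sub (tendsto_inv_atTop_zero (𝕜 := ℝ))
  have hupper : Tendsto (fun τ : ℝ => τ⁻¹ - 1) atTop (𝓝 (-1)) := by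
    simpa using (tendsto_inv_atTop_zero (𝕜 := ℝ)).sub_const 1
  refine tendsto_of_tendsto_of_tendsto_of_le_of_le' hlower hupper ?_ ?_ <;>
    filter_upwards [eventually_gt_atTop 0] with τ hτ
  · exact (neg_one_sub_inv_lt_muFn hτ).le
  · exact (muFn_lt_inv_sub_one hτ).le

lemma tendsto_muFn_atBot : Tendsto muFn atBot (𝓝 1) := by
  simpa [Function.comp_def, muFn_neg] using
    (tendsto_muFn_atTop.comp tendsto_neg_atBot_atTop).neg

lemma range_muFn : range muFn = Ioo (-1) 1 :=
  strictAnti_muFn.range_eq_Ioo_of_tendsto continuous_muFn tendsto_muFn_atBot tendsto_muFn_atTop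

theorem muFn_strictAnti_limits_unique_solution :
    StrictAnti muFn ∧
    Tendsto muFn atBot (nhds 1) ∧
    Tendsto muFn atTop (nhds (-1)) ∧
    (∀ r : ℝ, -1 < r → r < 1 → ∃! τ : ℝ, muFn τ = r) ∧
    (∀ r : ℝ, 1 ≤ |r| → ¬∃ τ : ℝ, muFn τ = r) := by
  refine ⟨strictAnti_muFn, tendsto_muFn_atBot, tendsto_muFn_atTop, fun r hr₁ hr₂ => ?_, ?_⟩
  · obtain ⟨τ, hτ⟩ : r ∈ range muFn := range_muFn ▸ ⟨hr₁, hr₂⟩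
    exact ⟨τ, hτ, fun σ hσ => strictAnti_muFn.injective (hσ.trans hτ.symm)⟩
  · rintro r hr ⟨τ, rfl⟩
    have hτ : muFn τ ∈ Ioo (-1) 1 := range_muFn ▸ mem_range_self τ
    exact hr.not_gt (abs_lt.2 hτ)
end

section
/- Let θ₁, θ₂, θ₃ ∈ ℝ not all zero and set a = √(θ₁²+θ₂²+θ₃²). The 4×4 real matrix A = [[0,-θ₁,θ₃,θ₂],[-θ₁,0,-θ₂,θ₃],[θ₃,θ₂,0,θ₁],[θ₂,-θ₃,-θ₁,0]] has characteristic polynomial λ⁴ - a⁴ (equivalently (λ² - a²)(λ² + a²)), so its eigenvalues over ℂ are a, -a, ia, -ia. -/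
open Matrix Polynomial

/-!
Cofactor expansion gives the characteristic polynomial `X⁴ - (θ₁² + θ₂² + θ₃²)²` over any
commutative ring, i.e. `X⁴ - a⁴`, and over `ℂ` this factors as `(X - a)(X + a)(X - ia)(X + ia)`.
-/

def quaternionGeodesicMatrix {R : Type*} [Ring R] (θ₁ θ₂ θ₃ : R) : Matrix (Fin 4) (Fin 4) R :=
  !![0, -θ₁, θ₃, θ₂; -θ₁, 0, -θ₂, θ₃; θ₃, θ₂, 0, θ₁; θ₂, -θ₃, -θ₁, 0]

theorem charpoly_quaternionGeodesicMatrix {R : Type*} [CommRing R] (θ₁ θ₂ θ₃ : R) :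
    (quaternionGeodesicMatrix θ₁ θ₂ θ₃).charpoly = X ^ 4 - C ((θ₁ ^ 2 + θ₂ ^ 2 + θ₃ ^ 2) ^ 2) := by
  simp [charpoly, charmatrix, quaternionGeodesicMatrix, det_succ_row_zero, Fin.sum_univ_succ,
    Fin.succAbove]
  ring

theorem isRoot_X_pow_four_sub_C_pow_four_iff {K : Type*} [CommRing K] [IsDomain K] {i : K}
    (hi : i ^ 2 = -1) (b z : K) :
    (X ^ 4 - C (b ^ 4)).IsRoot z ↔ z = b ∨ z = -b ∨ z = i * b ∨ z = -(i * b) := by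
  have hfactor : z ^ 4 - b ^ 4 = (z - b) * (z + b) * (z - i * b) * (z + i * b) := by
    linear_combination (z ^ 2 - b ^ 2) * b ^ 2 * hi
  simp only [IsRoot.def, eval_sub, eval_pow, eval_X, eval_C, hfactor, mul_eq_zero, sub_eq_zero,
    add_eq_zero_iff_eq_neg]
  tauto

theorem reduced_geodesic_matrix_eigenvalues_general (θ₁ θ₂ θ₃ : ℝ) :
    let a : ℝ := Real.sqrt (θ₁^2 + θ₂^2 + θ₃^2)
    let A : Matrix (Fin 4) (Fin 4) ℝ :=
      !![0, -θ₁, θ₃, θ₂; -θ₁, 0, -θ₂, θ₃; θ₃, θ₂, 0, θ₁; θ₂, -θ₃, -θ₁, 0]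
    A.charpoly = X^4 - C (a^4) ∧
    spectrum ℂ (A.map (Complex.ofReal ·)) =
      {(a : ℂ), -(a : ℂ), Complex.I * a, -(Complex.I * a)} := by
  intro a A
  have ha4 : a ^ 4 = (θ₁ ^ 2 + θ₂ ^ 2 + θ₃ ^ 2) ^ 2 := by
    rw [show a ^ 4 = (a ^ 2) ^ 2 by ring, Real.sq_sqrt (by positivity)]
  have hcharpoly : A.charpoly = X ^ 4 - C (a ^ 4) :=
    ha4 ▸ charpoly_quaternionGeodesicMatrix θ₁ θ₂ θ₃
  refine ⟨hcharpoly, ?_⟩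
  ext z
  rw [mem_spectrum_iff_isRoot_charpoly, show (Complex.ofReal ·) = ⇑Complex.ofRealHom from rfl,
    charpoly_map, hcharpoly]
  simpa using isRoot_X_pow_four_sub_C_pow_four_iff Complex.I_sq (a : ℂ) z

theorem reduced_geodesic_matrix_eigenvalues (θ₁ θ₂ θ₃ : ℝ)
    (hθ : ¬(θ₁ = 0 ∧ θ₂ = 0 ∧ θ₃ = 0)) :
    let a : ℝ := Real.sqrt (θ₁^2 + θ₂^2 + θ₃^2)
    let A : Matrix (Fin 4) (Fin 4) ℝ :=
      !![0, -θ₁, θ₃, θ₂; -θ₁, 0, -θ₂, θ₃; θ₃, θ₂, 0, θ₁; θ₂, -θ₃, -θ₁, 0]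
    A.charpoly = X^4 - C (a^4) ∧
    spectrum ℂ (A.map (Complex.ofReal ·)) =
      {(a : ℂ), -(a : ℂ), Complex.I * a, -(Complex.I * a)} :=
  reduced_geodesic_matrix_eigenvalues_general θ₁ θ₂ θ₃
end
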